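/- arXiv:1608.07317 — 4 statements merged into one kernel-verified Lean document; each statement's English description precedes it below -/
import Mathlib

section
/- (Cancellation Lemma) Let α, n be positive integers, b a unit modulo n, and k a nonzero integer. Define W' = {w ∈ (ℤ/nℤ)* : w^α ≡ b (mod n)} and S' = Σ_{w ∈ W'} e(kw/n). Then |S'| ≤ |k|·√n + σ(|k|); in particular |S'| = O_k(√n) as n → ∞. -/
/-!
Write `S(j) = ∑_{x ∈ W} e(jx/n)` for `W = {x : x ^ α = b}`. Multiplication by an element `u` of the
group `H` of `α`-th roots of unity permutes `W`, so `S(ku) = S(k)`. Averaging over `H` and using that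
`j ↦ kj` has fibres of size at most `|k|`, Parseval gives `|H| |S(k)|² ≤ |k| ∑_j |S(j)|² = |k| n |W|`.
As `W` is empty or a coset of `H`, this yields `|S(k)|² ≤ |k| n`.
-/

open Finset ArithmeticFunction

noncomputable def e (x : ℝ) : ℂ := Complex.exp (2 * Real.pi * Complex.I * x)

theorem AddMonoidHom.sum_comp_le_card_ker_mul {G A : Type*} [AddGroup G] [Fintype G]
    [AddMonoid A] [DecidableEq A] [Fintype A] (φ : G →+ A) {f : A → ℝ} (hf : ∀ a, 0 ≤ f a) :
    ∑ g, f (φ g) ≤ #{g | φ g = 0} * ∑ a, f a := by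
  rw [sum_comp, mul_sum]
  refine (sum_le_sum fun a ha ↦ ?_).trans
    (sum_le_univ_sum_of_nonneg fun a ↦ mul_nonneg (Nat.cast_nonneg _) (hf a))
  obtain ⟨g, -, rfl⟩ := mem_image.mp ha
  rw [nsmul_eq_mul, AddMonoidHom.card_fiber_eq_of_mem_range φ ⟨g, rfl⟩ ⟨0, map_zero φ⟩]

namespace AddChar

variable {R : Type*} [CommRing R]

noncomputable def expSum (ψ : AddChar R ℂ) (W : Finset R) (j : R) : ℂ := ∑ x ∈ W, ψ (j * x)

variable {ψ : AddChar R ℂ} {W : Finset R}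

theorem expSum_mul_of_mem {H : Subgroup Rˣ} (hW : ∀ u ∈ H, ∀ x ∈ W, (u : R) * x ∈ W)
    {u : Rˣ} (hu : u ∈ H) (j : R) : expSum ψ W (j * u) = expSum ψ W j :=
  sum_nbij' (fun x ↦ u * x) (fun x ↦ ↑u⁻¹ * x) (hW u hu) (hW u⁻¹ (inv_mem hu))
    (fun x _ ↦ by simp) (fun x _ ↦ by simp) (fun x _ ↦ by rw [mul_assoc])

variable [Fintype R] [DecidableEq R]

theorem sum_norm_expSum_sq (hψ : ψ.IsPrimitive) (W : Finset R) :
    ∑ j, ‖expSum ψ W j‖ ^ 2 = Fintype.card R * #W := by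
  have h : ∀ j, (‖expSum ψ W j‖ ^ 2 : ℂ) = ∑ x ∈ W, ∑ y ∈ W, ψ (j * (x - y)) := fun j ↦ by
    rw [← Complex.mul_conj', expSum, map_sum, sum_mul_sum]
    simp_rw [← map_neg_eq_conj, ← map_add_eq_mul, mul_sub, sub_eq_add_neg]
  apply Complex.ofReal_injective
  push_cast
  simp_rw [h]
  rw [sum_comm, sum_congr rfl fun x hx ↦ ?_, sum_const, nsmul_eq_mul, mul_comm]
  rw [sum_comm, sum_congr rfl fun y _ ↦ sum_mulShift _ hψ]
  simp [sub_eq_zero, hx]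

theorem card_mul_norm_expSum_sq_le (hψ : ψ.IsPrimitive) (H : Subgroup Rˣ)
    (hW : ∀ u ∈ H, ∀ x ∈ W, (u : R) * x ∈ W) (j : R) :
    Nat.card H * ‖expSum ψ W j‖ ^ 2 ≤ #{r | j * r = 0} * (Fintype.card R * #W) := by
  classical
  let f (r : R) := ‖expSum ψ W r‖ ^ 2
  have hf (r : R) : 0 ≤ f r := by positivity
  calc Nat.card H * f j = ∑ u : H, f (j * (u : Rˣ)) := by
        simp [f, expSum_mul_of_mem hW (Subtype.prop _), Nat.card_eq_fintype_card]
    _ = ∑ r ∈ univ.image (fun u : H ↦ ((u : Rˣ) : R)), f (j * r) :=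
        (sum_image (f := fun r ↦ f (j * r)) fun u _ v _ h ↦ Subtype.ext (Units.ext h)).symm
    _ ≤ ∑ r, f (AddMonoidHom.mulLeft j r) := sum_le_univ_sum_of_nonneg fun r ↦ hf _
    _ ≤ #{r | AddMonoidHom.mulLeft j r = 0} * ∑ r, f r :=
        AddMonoidHom.sum_comp_le_card_ker_mul _ hf
    _ = #{r | j * r = 0} * (Fintype.card R * #W) := by
        rw [sum_norm_expSum_sq hψ]; rfl

end AddChar

open AddChar

theorem pow_mul_eq_of_mem_ker {M : Type*} [CommMonoid M] {α : ℕ} {u : Mˣ}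
    (hu : u ∈ (powMonoidHom α : Mˣ →* Mˣ).ker) {x b : M} (hx : x ^ α = b) :
    ((u : M) * x) ^ α = b := by
  rw [mul_pow, ← Units.val_pow_eq_pow_val, show u ^ α = 1 from hu, Units.val_one, one_mul, hx]

theorem card_filter_pow_eq_le {M : Type*} [CommMonoid M] [Fintype M] [DecidableEq M] {α : ℕ}
    (hα : α ≠ 0) (b : Mˣ) : #{x : M | x ^ α = b} ≤ Nat.card (powMonoidHom α : Mˣ →* Mˣ).ker := by
  rcases (filter (fun x : M ↦ x ^ α = b) univ).eq_empty_or_nonempty with h | ⟨w, hw⟩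
  · simp [h]
  have h_units {x : M} (hx : x ∈ filter (fun x : M ↦ x ^ α = b) univ) :
      ∃ y : Mˣ, y ^ α = b ∧ (y : M) = x := by
    obtain ⟨y, rfl⟩ := (isUnit_pow_iff hα).mp ((mem_filter.mp hx).2 ▸ b.isUnit)
    exact ⟨y, Units.ext (by simpa using hx), rfl⟩
  obtain ⟨v, hv, rfl⟩ := h_units hw
  rw [← Nat.card_eq_finsetCard]
  refine Nat.card_le_card_of_surjective (fun u ↦ ⟨((u : Mˣ) * v : Mˣ), ?_⟩) fun ⟨x, hx⟩ ↦ ?_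
  · simpa using pow_mul_eq_of_mem_ker u.prop (mem_filter.mp hw).2
  · obtain ⟨y, hy, rfl⟩ := h_units hx
    exact ⟨⟨y * v⁻¹, by simp [mul_pow, hy, hv]⟩, by simp⟩

namespace ZMod

variable {n : ℕ} [NeZero n]

theorem card_intCast_mul_eq_zero_le {k : ℤ} (hk : k ≠ 0) :
    #{x : ZMod n | (k : ZMod n) * x = 0} ≤ k.natAbs := by
  have h (x : ZMod n) : (k : ZMod n) * x = 0 ↔ k.natAbs • x = 0 := by
    rcases Int.natAbs_eq k with h | h <;> rw [nsmul_eq_mul] <;> nth_rw 1 [h] <;> simp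
  simp_rw [h]
  convert IsAddCyclic.card_nsmul_eq_zero_le (α := ZMod n) (Int.natAbs_pos.mpr hk)

theorem e_intCast_div (m : ℤ) : e (m / n) = stdAddChar (m : ZMod n) := by
  rw [stdAddChar_coe, e]
  push_cast
  ring_nf

theorem sum_range_filter_e_eq_expSum (P : ZMod n → Prop) [DecidablePred P] (k : ℤ) :
    ∑ w ∈ (range n).filter (fun w : ℕ ↦ P w), e (k * w / n) =
      expSum stdAddChar {x | P x} (k : ZMod n) := by
  refine sum_nbij' (fun w ↦ w) val (fun w hw ↦ ?_) (fun x hx ↦ ?_) (fun w hw ↦ ?_) (fun x _ ↦ ?_)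
    fun w _ ↦ ?_
  · exact mem_filter.mpr ⟨mem_univ _, (mem_filter.mp hw).2⟩
  · exact mem_filter.mpr ⟨mem_range.mpr (val_lt x), by simpa using (mem_filter.mp hx).2⟩
  · exact val_cast_of_lt (mem_range.mp (mem_filter.mp hw).1)
  · exact natCast_zmod_val x
  · rw [← Int.cast_natCast w, ← Int.cast_mul, e_intCast_div]
    push_cast
    rfl

theorem norm_expSum_pow_eq_sq_le {α : ℕ} (hα : α ≠ 0) (b : (ZMod n)ˣ) {k : ℤ} (hk : k ≠ 0) :
    ‖expSum stdAddChar {x | x ^ α = (b : ZMod n)} (k : ZMod n)‖ ^ 2 ≤ k.natAbs * n := by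
  let H := (powMonoidHom α : (ZMod n)ˣ →* (ZMod n)ˣ).ker
  have hH : (0 : ℝ) < Nat.card H := Nat.cast_pos.mpr Nat.card_pos
  have hS := card_mul_norm_expSum_sq_le (W := {x : ZMod n | x ^ α = (b : ZMod n)})
    (isPrimitive_stdAddChar n) H (fun u hu x hx ↦ by
      simp only [mem_filter, mem_univ, true_and] at hx ⊢
      exact pow_mul_eq_of_mem_ker hu hx) (k : ZMod n)
  have hW : (#{x : ZMod n | x ^ α = (b : ZMod n)} : ℝ) ≤ Nat.card H := by
    exact_mod_cast card_filter_pow_eq_le hα b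
  have hK : (#{x : ZMod n | (k : ZMod n) * x = 0} : ℝ) ≤ k.natAbs := by
    exact_mod_cast card_intCast_mul_eq_zero_le hk
  rw [card] at hS
  refine le_of_mul_le_mul_left (hS.trans ?_) hH
  calc _ ≤ (k.natAbs : ℝ) * (n * Nat.card H) := by gcongr
    _ = _ := by ring

end ZMod

/-- Cancellation Lemma: the exponential sum over solutions of
w^α ≡ b (mod n), b a unit, is O_k(√n). -/
theorem cancellation_lemma (n α : ℕ) (hn : 0 < n) (hα : 1 ≤ α) (b : (ZMod n)ˣ)
    (k : ℤ) (hk : k ≠ 0) :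
    ‖∑ w ∈ (Finset.range n).filter
        (fun w : ℕ => ((w : ZMod n)) ^ α = (b : ZMod n)), e ((k : ℝ) * w / n)‖ ≤
      (k.natAbs : ℝ) * Real.sqrt n + (sigma 1 k.natAbs : ℝ) := by
  have : NeZero n := NeZero.of_pos hn
  rw [ZMod.sum_range_filter_e_eq_expSum (fun x ↦ x ^ α = (b : ZMod n))]
  have hS := ZMod.norm_expSum_pow_eq_sq_le (Nat.one_le_iff_ne_zero.mp hα) b hk
  have hk1 : (1 : ℝ) ≤ k.natAbs := by exact_mod_cast Int.natAbs_pos.mpr hk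
  refine le_add_of_le_of_nonneg (le_of_pow_le_pow_left₀ two_ne_zero (by positivity) ?_)
    (Nat.cast_nonneg _)
  rw [mul_pow, Real.sq_sqrt (Nat.cast_nonneg n)]
  exact hS.trans (by gcongr; exact le_self_pow₀ hk1 two_ne_zero)
end

section
/- Let n be odd composite with n - 1 = d·2^s (d odd), and let k be a nonzero integer. Then |Σ_{w: w^d ≡ 1 mod n, 0 ≤ w < n} e(kw/n)| ≤ |k|·√n + σ(|k|), hence this sum is O_k(√n). -/
/-!
Write `H` for the group of `d`-th roots of unity in `ZMod n`, `ψ` for the standard additive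
character and `T t = ∑_{z ∈ H} ψ (k t z)`, so that the sum in question is `T 1`. Since `T` is
constant on `H`, `|H| |T 1|² ≤ ∑_t |T t|²`, and by orthogonality of `ψ` the right-hand side
is `n` times the number of pairs `(y, z) ∈ H²` with `k y = k z`, which is at most `|H| |k|`.
Hence `|T 1|² ≤ n |k| ≤ (|k| √n)²`.
-/

open Finset ArithmeticFunction

theorem Finset.card_filter_mul_eq_mul_le {R : Type*} [Ring R] [Fintype R] [DecidableEq R]
    (s : Finset R) (a : R) :
    #{p ∈ s ×ˢ s | a * p.1 = a * p.2} ≤ #s * #{x | a * x = 0} := by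
  rw [← card_product]
  refine card_le_card_of_injOn (fun p => (p.1, p.1 - p.2)) (fun p hp => ?_)
    (fun p _ q _ hpq => ?_)
  · simp only [coe_filter, mem_product, Set.mem_ofPred_eq] at hp
    simp [hp.1.1, mul_sub, hp.2]
  · obtain ⟨h1, h2⟩ := Prod.mk.inj hpq
    rw [h1, sub_right_inj] at h2
    exact Prod.ext h1 h2

namespace AddChar

variable {R : Type*} [CommRing R] [Fintype R] [DecidableEq R] {ψ : AddChar R ℂ}

theorem sum_norm_sq_sum_apply_mul {ι : Type*} (hψ : ψ.IsPrimitive) (s : Finset ι)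
    (f : ι → R) :
    ∑ t : R, ‖∑ i ∈ s, ψ (t * f i)‖ ^ 2 =
      Fintype.card R * #{p ∈ s ×ˢ s | f p.1 = f p.2} := by
  have hmul_conj (t : R) (i j : ι) :
      ψ (t * f i) * starRingEnd ℂ (ψ (t * f j)) = ψ (t * (f i - f j)) := by
    rw [← map_neg_eq_conj, ← map_add_eq_mul, mul_sub, sub_eq_add_neg]
  apply Complex.ofReal_injective
  push_cast
  simp_rw [← Complex.mul_conj', map_sum, sum_mul_sum, hmul_conj, ← sum_product' s s]
  rw [sum_comm]
  simp only [sum_mulShift _ hψ, sub_eq_zero]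
  rw [← Nat.cast_sum, sum_ite, sum_const_zero, add_zero, sum_const, smul_eq_mul, Nat.cast_mul,
    mul_comm]

theorem norm_sq_sum_subgroup_le (hψ : ψ.IsPrimitive) (H : Subgroup Rˣ) [Fintype H] (a : R) :
    ‖∑ z : H, ψ (a * ((z : Rˣ) : R))‖ ^ 2 ≤ Fintype.card R * #{x | a * x = 0} := by
  let ι : H ↪ R := ⟨fun h => ((h : Rˣ) : R), Units.val_injective.comp Subtype.val_injective⟩
  set T : R → ℂ := fun t => ∑ x ∈ univ.map ι, ψ (t * (a * x))
  have hT_const (h : H) : T (ι h) = ∑ z : H, ψ (a * ((z : Rˣ) : R)) := by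
    simp only [T, sum_map]
    refine Fintype.sum_equiv (Equiv.mulLeft h) _ _ fun z => ?_
    simp only [ι, Function.Embedding.coeFn_mk, Equiv.coe_mulLeft, Subgroup.coe_mul,
      Units.val_mul, mul_left_comm]
  have hH : 0 < Fintype.card H := Fintype.card_pos
  refine le_of_mul_le_mul_left ?_ (Nat.cast_pos.2 hH : (0 : ℝ) < Fintype.card H)
  calc Fintype.card H * ‖∑ z : H, ψ (a * ((z : Rˣ) : R))‖ ^ 2
        = ∑ h : H, ‖T (ι h)‖ ^ 2 := by simp [hT_const]
    _ = ∑ t ∈ univ.map ι, ‖T t‖ ^ 2 := by rw [sum_map]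
    _ ≤ ∑ t : R, ‖T t‖ ^ 2 := sum_le_univ_sum_of_nonneg fun _ => by positivity
    _ = Fintype.card R * #{p ∈ univ.map ι ×ˢ univ.map ι | a * p.1 = a * p.2} :=
      sum_norm_sq_sum_apply_mul hψ _ _
    _ ≤ Fintype.card R * (Fintype.card H * #{x | a * x = 0}) := by
      have hpairs := card_filter_mul_eq_mul_le (univ.map ι) a
      rw [card_map, card_univ] at hpairs
      gcongr
      exact_mod_cast hpairs
    _ = _ := by ring

end AddChar

theorem ZMod.card_intCast_mul_eq_zero_le_s9 {n : ℕ} [NeZero n] {k : ℤ} (hk : k ≠ 0) :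
    #{x : ZMod n | (k : ZMod n) * x = 0} ≤ k.natAbs := by
  calc #{x : ZMod n | (k : ZMod n) * x = 0} = #{x : ZMod n | k.natAbs • x = 0} := by
        congr 1
        ext x
        rcases Int.natAbs_eq k with h | h <;> rw [h] <;> simp [nsmul_eq_mul]
    _ ≤ k.natAbs := IsAddCyclic.card_nsmul_eq_zero_le (Int.natAbs_pos.2 hk)

theorem e_intCast_div_natCast (n : ℕ) [NeZero n] (j : ℤ) :
    e (j / n) = ZMod.stdAddChar (j : ZMod n) := by
  rw [e, ZMod.stdAddChar_coe]
  push_cast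
  ring_nf

theorem sum_filter_pow_eq_one_eq_sum_rootsOfUnity (n d : ℕ) [NeZero n] [NeZero d]
    [Fintype (rootsOfUnity d (ZMod n))] (k : ℤ) :
    ∑ w ∈ (Finset.range n).filter (fun w : ℕ => ((w : ZMod n)) ^ d = 1),
        e ((k : ℝ) * w / n) =
      ∑ z : rootsOfUnity d (ZMod n),
        ZMod.stdAddChar ((k : ZMod n) * ((z : (ZMod n)ˣ) : ZMod n)) := by
  symm
  refine sum_bij' (fun z _ => ((z : (ZMod n)ˣ) : ZMod n).val)
    (fun w hw => rootsOfUnity.mkOfPowEq _ (mem_filter.1 hw).2) (fun z _ => ?_)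
    (fun _ _ => mem_univ _) (fun z _ => ?_) (fun w hw => ?_) (fun z _ => ?_)
  · simp [ZMod.val_lt, ← Units.val_pow_eq_pow_val, (mem_rootsOfUnity _ _).1 z.2]
  · ext; simp
  · simp [ZMod.val_cast_of_lt (mem_range.1 (mem_filter.1 hw).1)]
  · set v := ((z : (ZMod n)ˣ) : ZMod n).val
    rw [show (k : ℝ) * v / n = ((k * v : ℤ) : ℝ) / n by push_cast; ring, e_intCast_div_natCast]
    simp [v]

theorem S2_bound_general (n d : ℕ) (hn : 1 < n)
    (hd : Odd d) (k : ℤ) (hk : k ≠ 0) :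
    ‖∑ w ∈ (Finset.range n).filter (fun w : ℕ => ((w : ZMod n)) ^ d = 1),
        e ((k : ℝ) * w / n)‖ ≤
      (k.natAbs : ℝ) * Real.sqrt n + (sigma 1 k.natAbs : ℝ) := by
  have : NeZero n := ⟨by omega⟩
  have : NeZero d := ⟨hd.pos.ne'⟩
  have := Fintype.ofFinite (rootsOfUnity d (ZMod n))
  rw [sum_filter_pow_eq_one_eq_sum_rootsOfUnity]
  set S := ∑ z : rootsOfUnity d (ZMod n),
    ZMod.stdAddChar ((k : ZMod n) * ((z : (ZMod n)ˣ) : ZMod n))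
  have hS : ‖S‖ ^ 2 ≤ n * k.natAbs :=
    calc ‖S‖ ^ 2 ≤ Fintype.card (ZMod n) * #{x | (k : ZMod n) * x = 0} :=
          AddChar.norm_sq_sum_subgroup_le (ZMod.isPrimitive_stdAddChar n) _ _
      _ ≤ n * k.natAbs := by
          rw [ZMod.card]
          gcongr
          exact_mod_cast ZMod.card_intCast_mul_eq_zero_le_s9 hk
  have hK : (1 : ℝ) ≤ k.natAbs := by exact_mod_cast Int.natAbs_pos.2 hk
  have hS' : ‖S‖ ≤ k.natAbs * √n := by
    refine le_of_pow_le_pow_left₀ two_ne_zero (by positivity) ?_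
    rw [mul_pow, Real.sq_sqrt (Nat.cast_nonneg n)]
    nlinarith
  exact hS'.trans (le_add_of_nonneg_right (Nat.cast_nonneg _))

/-- estimate of S₂, the exponential sum over solutions of w^d ≡ 1 (mod n). -/
theorem S2_bound (n d s : ℕ) (hodd : Odd n) (hcomp : ¬ n.Prime) (hn : 1 < n)
    (hd : Odd d) (hds : n - 1 = d * 2 ^ s) (k : ℤ) (hk : k ≠ 0) :
    ‖∑ w ∈ (Finset.range n).filter (fun w : ℕ => ((w : ZMod n)) ^ d = 1),
        e ((k : ℝ) * w / n)‖ ≤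
      (k.natAbs : ℝ) * Real.sqrt n + (sigma 1 k.natAbs : ℝ) :=
  S2_bound_general n d hn hd k hk
end

section
/- Let n be odd composite with n - 1 = d·2^s (d odd), and let k be a nonzero integer. Then |Σ_{j=0}^{s-1} Σ_{w: w^{2^j d} ≡ -1 mod n, 0 ≤ w < n} e(kw/n)| ≤ s·(|k|·√n + σ(|k|)) ≤ (log₂ n)·(|k|·√n + σ(|k|)), hence this sum is O_k(√n · log n). -/
/-!
Fix `m = 2 ^ j * d` and write `S(a) = ∑_{w ^ m = -1} ψ(a w)` for the standard additive character
`ψ` of `ZMod n`, so that the inner sum is `S(k)`. The set `T` of solutions of `w ^ m = -1` is empty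
or a coset of the group `H` of `m`-th roots of unity, hence `|T| ≤ |H|`, and `S` is constant on
the orbit `k H`. By Parseval, `∑_a |S(a)|² = n |T|`, so `|k H| · |S(k)|² ≤ n |H|`. Since
multiplication by `k` is at most `|k|`-to-one on the cyclic group `ZMod n`, `|k H| ≥ |H| / |k|`,
which gives `|S(k)|² ≤ |k| n`. Summing over `j < s` and using `2 ^ s ≤ n` gives both bounds.
-/

open Finset ArithmeticFunction

section Character

variable {R : Type*} [CommRing R] [Fintype R] [DecidableEq R] {ψ : AddChar R ℂ}

theorem AddChar.sum_norm_sq_sum_mulShift (hψ : ψ.IsPrimitive) (T : Finset R) :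
    ∑ a, ‖∑ w ∈ T, ψ (a * w)‖ ^ 2 = Fintype.card R * #T := by
  have hsq (a : R) :
      ((‖∑ w ∈ T, ψ (a * w)‖ ^ 2 : ℝ) : ℂ) = ∑ w ∈ T, ∑ v ∈ T, ψ (a * (w - v)) := by
    rw [Complex.ofReal_pow, ← Complex.mul_conj', map_sum, sum_mul_sum]
    simp_rw [← AddChar.map_neg_eq_conj, ← AddChar.map_add_eq_mul, mul_sub, sub_eq_add_neg]
  apply Complex.ofReal_injective
  rw [Complex.ofReal_sum]
  simp_rw [hsq]
  rw [sum_comm]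
  simp_rw [sum_comm (s := univ), AddChar.sum_mulShift _ hψ, sub_eq_zero]
  simp [sum_ite_eq, mul_comm]

theorem AddChar.card_image_mul_mul_norm_sq_le (hψ : ψ.IsPrimitive) {T : Finset R}
    {H : Finset Rˣ} (hT : ∀ u ∈ H, ∀ w, (u : R) * w ∈ T ↔ w ∈ T) (a : R) :
    #(H.image fun u : Rˣ => a * u) * ‖∑ w ∈ T, ψ (a * w)‖ ^ 2 ≤ Fintype.card R * #T := by
  set S : R → ℝ := fun b => ‖∑ w ∈ T, ψ (b * w)‖ ^ 2
  have hS : ∀ b ∈ H.image fun u : Rˣ => a * u, S b = S a := by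
    intro b hb
    obtain ⟨u, hu, rfl⟩ := mem_image.1 hb
    have := sum_equiv (Units.mulLeft u) (fun w => (hT u hu w).symm) (f := fun w => ψ (a * u * w))
      (g := fun w => ψ (a * w)) (fun w _ => by simp [mul_assoc])
    simp only [S, this]
  calc (#(H.image fun u : Rˣ => a * u) : ℝ) * S a = ∑ b ∈ H.image fun u : Rˣ => a * u, S b := by
        rw [sum_congr rfl hS, sum_const, nsmul_eq_mul]
    _ ≤ ∑ b, S b := sum_le_sum_of_subset_of_nonneg (subset_univ _) fun _ _ _ => by positivity
    _ = _ := AddChar.sum_norm_sq_sum_mulShift hψ T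

end Character

theorem card_filter_pow_eq_le_card_rootsOfUnity {M : Type*} [CommMonoid M] [Fintype M]
    [DecidableEq M] {m : ℕ} (hm : m ≠ 0) {b : M} (hb : IsUnit b) :
    #{w : M | w ^ m = b} ≤ #{u : Mˣ | u ^ m = 1} := by
  rcases (filter (fun w : M => w ^ m = b) univ).eq_empty_or_nonempty with h | ⟨c, hc⟩
  · simp [h]
  have hunit {w : M} (hw : w ^ m = b) : IsUnit w := (isUnit_pow_iff hm).1 (hw ▸ hb)
  rw [mem_filter] at hc
  let c' := (hunit hc.2).unit
  refine (card_le_card fun w hw => ?_).trans (card_image_le (f := fun u : Mˣ => (c' * u : M)))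
  rw [mem_filter] at hw
  refine mem_image.2 ⟨c'⁻¹ * (hunit hw.2).unit, mem_filter.2 ⟨mem_univ _, ?_⟩, by simp⟩
  have hpow : c' ^ m = (hunit hw.2).unit ^ m := Units.ext (by simp [c', hc.2, hw.2])
  rw [mul_pow, inv_pow, hpow, inv_mul_cancel]

theorem card_filter_zsmul_eq_le {G : Type*} [AddCommGroup G] [Fintype G] [DecidableEq G]
    [IsAddCyclic G] {k : ℤ} (hk : k ≠ 0) (b : G) : #{x : G | k • x = b} ≤ k.natAbs := by
  rcases (filter (fun x : G => k • x = b) univ).eq_empty_or_nonempty with h | ⟨x₀, hx₀⟩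
  · simp [h]
  rw [mem_filter] at hx₀
  refine (card_le_card_of_injOn (· - x₀) (t := {y : G | k.natAbs • y = 0}) ?_
    (fun x _ y _ h => sub_left_injective h)).trans
    (IsAddCyclic.card_nsmul_eq_zero_le (Int.natAbs_pos.2 hk))
  intro x hx
  simp_all [natAbs_nsmul_eq_zero, zsmul_sub]

namespace ZMod

variable {n : ℕ} [NeZero n]

theorem card_le_natAbs_mul_card_image_intCast_mul {k : ℤ} (hk : k ≠ 0) (H : Finset (ZMod n)ˣ) :
    #H ≤ k.natAbs * #(H.image fun u : (ZMod n)ˣ => (k : ZMod n) * u) := by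
  refine card_le_mul_card_image H _ fun b _ => ?_
  refine (card_le_card_of_injOn (fun u : (ZMod n)ˣ => (u : ZMod n)) (fun u hu => ?_)
    Units.val_injective.injOn).trans (card_filter_zsmul_eq_le hk b)
  simp_all [zsmul_eq_mul]

theorem e_mul_div_eq_stdAddChar (k : ℤ) (w : ℕ) :
    e ((k : ℝ) * w / n) = stdAddChar ((k : ZMod n) * (w : ZMod n)) := by
  rw [show (k : ZMod n) * w = ((k * w : ℤ) : ZMod n) by push_cast; rfl, stdAddChar_coe, e]
  push_cast
  ring_nf

theorem norm_sum_filter_pow_eq_neg_one_stdAddChar_le {m : ℕ} (hm : m ≠ 0) {k : ℤ} (hk : k ≠ 0) :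
    ‖∑ w : ZMod n with w ^ m = -1, stdAddChar ((k : ZMod n) * w)‖ ≤ k.natAbs * √n := by
  set S := ∑ w : ZMod n with w ^ m = -1, stdAddChar ((k : ZMod n) * w)
  set T : Finset (ZMod n) := {w | w ^ m = -1}
  set H : Finset (ZMod n)ˣ := {u | u ^ m = 1}
  have hT : ∀ u ∈ H, ∀ w, (u : ZMod n) * w ∈ T ↔ w ∈ T := by
    intro u hu w
    simp_all [T, H, mul_pow, ← Units.val_pow_eq_pow_val]
  have horbit := AddChar.card_image_mul_mul_norm_sq_le (isPrimitive_stdAddChar n) hT k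
  have hfibre := card_le_natAbs_mul_card_image_intCast_mul hk H
  have hTH : #T ≤ #H := card_filter_pow_eq_le_card_rootsOfUnity hm isUnit_one.neg
  have hHpos : 0 < #H := card_pos.2 ⟨1, by simp [H]⟩
  rw [ZMod.card] at horbit
  have hsq : ‖S‖ ^ 2 ≤ k.natAbs * n := by
    have : (H.card : ℝ) * ‖S‖ ^ 2 ≤ H.card * ((k.natAbs : ℝ) * n) := by
      calc (H.card : ℝ) * ‖S‖ ^ 2
          ≤ (k.natAbs : ℝ) * (H.image fun u : (ZMod n)ˣ => (k : ZMod n) * u).card * ‖S‖ ^ 2 := by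
            gcongr; exact_mod_cast hfibre
        _ ≤ (k.natAbs : ℝ) * (n * T.card) := by rw [mul_assoc]; gcongr
        _ = T.card * ((k.natAbs : ℝ) * n) := by ring
        _ ≤ H.card * ((k.natAbs : ℝ) * n) := by gcongr
    exact le_of_mul_le_mul_left this (by exact_mod_cast hHpos)
  have hk1 : (1 : ℝ) ≤ k.natAbs := by exact_mod_cast Int.natAbs_pos.2 hk
  calc ‖S‖ ≤ √(k.natAbs * n) := Real.le_sqrt_of_sq_le hsq
    _ ≤ √((k.natAbs) ^ 2 * n) := by gcongr; nlinarith
    _ = k.natAbs * √n := by rw [Real.sqrt_mul (by positivity), Real.sqrt_sq (by positivity)]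

theorem sum_range_filter_e_eq_sum_stdAddChar (P : ZMod n → Prop) [DecidablePred P] (k : ℤ) :
    ∑ w ∈ (range n).filter (fun w : ℕ => P w), e ((k : ℝ) * w / n) =
      ∑ w : ZMod n with P w, stdAddChar ((k : ZMod n) * w) := by
  refine sum_nbij' (fun w : ℕ => (w : ZMod n)) val (fun w hw => ?_) (fun w hw => ?_)
    (fun w hw => val_cast_of_lt (mem_range.1 (mem_filter.1 hw).1))
    (fun w _ => natCast_zmod_val w) (fun w _ => e_mul_div_eq_stdAddChar k w)
  · simp_all
  · simp_all [val_lt]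

end ZMod

theorem Real.natCast_le_logb_two_of_two_pow_le {s n : ℕ} (h : 2 ^ s ≤ n) :
    (s : ℝ) ≤ Real.logb 2 n := by
  rw [Real.le_logb_iff_rpow_le one_lt_two (by exact_mod_cast (Nat.one_le_two_pow).trans h),
    Real.rpow_natCast]
  exact_mod_cast h

theorem S3_bound_general (n d s : ℕ) (hn : 1 < n)
    (hds : n - 1 = d * 2 ^ s) (k : ℤ) (hk : k ≠ 0) :
    ‖∑ j ∈ Finset.range s, ∑ w ∈ (Finset.range n).filter
        (fun w : ℕ => ((w : ZMod n)) ^ (2 ^ j * d) = -1), e ((k : ℝ) * w / n)‖ ≤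
      (s : ℝ) * ((k.natAbs : ℝ) * Real.sqrt n + (sigma 1 k.natAbs : ℝ)) ∧
    (s : ℝ) * ((k.natAbs : ℝ) * Real.sqrt n + (sigma 1 k.natAbs : ℝ)) ≤
      Real.logb 2 n * ((k.natAbs : ℝ) * Real.sqrt n + (sigma 1 k.natAbs : ℝ)) := by
  have : NeZero n := ⟨by omega⟩
  have hd : d ≠ 0 := by rintro rfl; omega
  have h2s : 2 ^ s ≤ n := by have := Nat.le_mul_of_pos_left (2 ^ s) (Nat.pos_of_ne_zero hd); omega
  refine ⟨?_, by gcongr; exact Real.natCast_le_logb_two_of_two_pow_le h2s⟩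
  calc _ ≤ ∑ j ∈ range s, ((k.natAbs : ℝ) * √n + sigma 1 k.natAbs) := by
        refine norm_sum_le_of_le _ fun j _ => ?_
        rw [ZMod.sum_range_filter_e_eq_sum_stdAddChar (· ^ (2 ^ j * d) = -1)]
        exact (ZMod.norm_sum_filter_pow_eq_neg_one_stdAddChar_le (by positivity) hk).trans
          (le_add_of_nonneg_right (by positivity))
    _ = _ := by rw [sum_const, card_range, nsmul_eq_mul]

/-- estimate of S₃, the exponential sum over solutions of
w^(2^j d) ≡ -1 (mod n), summed over j < s. -/
theorem S3_bound (n d s : ℕ) (hodd : Odd n) (hcomp : ¬ n.Prime) (hn : 1 < n)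
    (hd : Odd d) (hds : n - 1 = d * 2 ^ s) (k : ℤ) (hk : k ≠ 0) :
    ‖∑ j ∈ Finset.range s, ∑ w ∈ (Finset.range n).filter
        (fun w : ℕ => ((w : ZMod n)) ^ (2 ^ j * d) = -1), e ((k : ℝ) * w / n)‖ ≤
      (s : ℝ) * ((k.natAbs : ℝ) * Real.sqrt n + (sigma 1 k.natAbs : ℝ)) ∧
    (s : ℝ) * ((k.natAbs : ℝ) * Real.sqrt n + (sigma 1 k.natAbs : ℝ)) ≤
      Real.logb 2 n * ((k.natAbs : ℝ) * Real.sqrt n + (sigma 1 k.natAbs : ℝ)) :=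
  S3_bound_general n d s hn hds k hk
end

section
/- Let n be odd composite with n - 1 = d·2^s (d odd), W(n) the set of Miller-Rabin witnesses of n, and k a nonzero integer. Then |Σ_{w ∈ W(n)} e(kw/n)| ≤ σ(|k|) + (1 + log₂ n)·(|k|√n + σ(|k|)); in particular the witness exponential sum is O_k(√n log n) = o(n). -/
/-!
The witnesses are the units of `ZMod n` minus the classes `{a ^ d = 1}` and `{a ^ (2 ^ j * d) = -1}`,
`j < s`, which are pairwise disjoint because `-1 ≠ 1`. For a class `X = {x ^ m = c}` with `c` a unit,
put `S a = ∑ x ∈ X, e (k a x / n)`. Every `g` in `G = {g ^ m = 1}` is a unit with `g X = X`, so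
`S g = S 1`, while orthogonality of characters gives
`∑ a, |S a|² = n · #{(x, x') ∈ X² | k (x - x') = 0} ≤ n · #X · #{y | k y = 0}`.
As `#X ≤ #G` and multiplication by `k` on the cyclic group `ZMod n` has at most `|k|` elements in
its kernel, `|S 1|² ≤ n |k|`. Summing the `s + 2` class bounds, with `s ≤ log₂ n`, and even
`s + 1 ≤ log₂ n` unless `d = 1`, where `{a ^ d = 1} = {1}`, gives the estimate.
-/

open Finset ArithmeticFunction

theorem norm_e (x : ℝ) : ‖e x‖ = 1 := by
  simp [e, Complex.norm_exp]

section SecondMoment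

variable {R : Type*} [CommRing R] [Fintype R] [DecidableEq R] {ψ : AddChar R ℂ}

theorem sum_norm_sq_sum_addChar_mul (hψ : ψ.IsPrimitive) (b : R) (X : Finset R) :
    ∑ a : R, ‖∑ x ∈ X, ψ (b * a * x)‖ ^ 2 =
      Fintype.card R * #{p ∈ X ×ˢ X | b * (p.1 - p.2) = 0} := by
  have hterm (a : R) : ((‖∑ x ∈ X, ψ (b * a * x)‖ ^ 2 : ℝ) : ℂ) =
      ∑ p ∈ X ×ˢ X, ψ (a * (b * (p.1 - p.2))) := by
    rw [Complex.ofReal_pow, ← Complex.mul_conj', map_sum, sum_mul_sum, ← sum_product']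
    refine sum_congr rfl fun p _ => ?_
    rw [← AddChar.map_neg_eq_conj, ← AddChar.map_add_eq_mul]
    ring_nf
  apply Complex.ofReal_injective
  rw [Complex.ofReal_sum]
  simp_rw [hterm]
  rw [sum_comm]
  simp_rw [AddChar.sum_mulShift _ hψ, Nat.cast_ite, Nat.cast_zero]
  rw [← sum_filter, sum_const, nsmul_eq_mul]
  push_cast
  ring

theorem card_filter_mul_sub_eq_zero_le (b : R) (X : Finset R) :
    #{p ∈ X ×ˢ X | b * (p.1 - p.2) = 0} ≤ #X * #{y | b * y = 0} := by
  rw [← card_product]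
  refine card_le_card_of_injOn (fun p => (p.2, p.1 - p.2)) ?_ ?_
  · intro p hp
    simp only [coe_filter, mem_product, Set.mem_ofPred_eq] at hp
    simp [hp.1.2, hp.2]
  · intro p _ q _ h
    simp only [Prod.mk.injEq] at h
    ext
    · simpa [h.1] using h.2
    · exact h.1

omit [Fintype R] in
theorem sum_addChar_mul_mul_of_mul_mem {X : Finset R} {g : R} (hg : IsUnit g)
    (hgX : ∀ x ∈ X, g * x ∈ X) (b : R) :
    ∑ x ∈ X, ψ (b * g * x) = ∑ x ∈ X, ψ (b * x) := by
  have hinj : Set.InjOn (g * ·) X := fun x _ y _ h => hg.mul_left_cancel h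
  have himage : X.image (g * ·) = X :=
    eq_of_subset_of_card_le (image_subset_iff.mpr hgX) (card_image_of_injOn hinj).ge
  conv_rhs => rw [← himage, sum_image hinj]
  simp only [mul_assoc]

theorem card_mul_norm_sq_sum_addChar_le (hψ : ψ.IsPrimitive) {X G : Finset R}
    (hG : ∀ g ∈ G, IsUnit g) (hGX : ∀ g ∈ G, ∀ x ∈ X, g * x ∈ X) (b : R) :
    #G * ‖∑ x ∈ X, ψ (b * x)‖ ^ 2 ≤ Fintype.card R * (#X * #{y | b * y = 0}) := by
  calc (#G : ℝ) * ‖∑ x ∈ X, ψ (b * x)‖ ^ 2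
      = ∑ g ∈ G, ‖∑ x ∈ X, ψ (b * x)‖ ^ 2 := by rw [sum_const, nsmul_eq_mul]
    _ = ∑ g ∈ G, ‖∑ x ∈ X, ψ (b * g * x)‖ ^ 2 := sum_congr rfl fun g hg => by
        rw [sum_addChar_mul_mul_of_mul_mem (hG g hg) (hGX g hg)]
    _ ≤ ∑ a : R, ‖∑ x ∈ X, ψ (b * a * x)‖ ^ 2 :=
        sum_le_univ_sum_of_nonneg fun _ => sq_nonneg _
    _ = Fintype.card R * #{p ∈ X ×ˢ X | b * (p.1 - p.2) = 0} := sum_norm_sq_sum_addChar_mul hψ b X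
    _ ≤ Fintype.card R * (#X * #{y | b * y = 0}) := by
        gcongr
        exact_mod_cast card_filter_mul_sub_eq_zero_le b X

end SecondMoment

theorem card_pow_eq_le_card_pow_eq_one {M : Type*} [CommMonoid M] [Fintype M] [DecidableEq M]
    {m : ℕ} (hm : m ≠ 0) {c : M} (hc : IsUnit c) :
    #{x : M | x ^ m = c} ≤ #{g : M | g ^ m = 1} := by
  rcases Finset.eq_empty_or_nonempty {x : M | x ^ m = c} with hX | ⟨x₀, hx₀⟩
  · simp [hX]
  rw [mem_filter_univ] at hx₀
  obtain ⟨u, rfl⟩ : IsUnit x₀ := (isUnit_pow_iff hm).mp (hx₀ ▸ hc)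
  refine card_le_card_of_injOn (fun x => ↑u⁻¹ * x) (fun x hx => ?_)
    (fun x _ y _ h => (Units.isUnit _).mul_left_cancel h)
  simp only [coe_filter, mem_univ, true_and, Set.mem_ofPred_eq] at hx ⊢
  rw [mul_pow, hx, ← hx₀, ← mul_pow, Units.inv_mul, one_pow]

theorem range_filter_natCast_eq_one {n : ℕ} (hn : 1 < n) :
    (range n).filter (fun a : ℕ => (a : ZMod n) = 1) = {1} := by
  ext a
  simp only [mem_filter, mem_range, mem_singleton]
  refine ⟨fun ⟨ha, h⟩ => ?_, fun ha => ⟨ha ▸ hn, by rw [ha, Nat.cast_one]⟩⟩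
  rwa [← Nat.cast_one, ZMod.natCast_eq_natCast_iff', Nat.mod_eq_of_lt ha,
    Nat.mod_eq_of_lt hn] at h

section ZMod

variable {n : ℕ} [NeZero n]

theorem ZMod.isUnit_iff_pow_totient_eq_one {x : ZMod n} : IsUnit x ↔ x ^ n.totient = 1 :=
  ⟨fun ⟨u, hu⟩ => hu ▸ by rw [← Units.val_pow_eq_pow_val, ZMod.pow_totient, Units.val_one],
    fun h => (isUnit_pow_iff (Nat.totient_pos.mpr (NeZero.pos n)).ne').mp (h ▸ isUnit_one)⟩

theorem card_mul_eq_zero_le_natAbs {k : ℤ} (hk : k ≠ 0) :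
    #{y : ZMod n | (k : ZMod n) * y = 0} ≤ k.natAbs := by
  have h (y : ZMod n) : (k : ZMod n) * y = 0 ↔ k.natAbs • y = 0 := by
    rw [natAbs_nsmul_eq_zero, zsmul_eq_mul]
  simp_rw [h]
  exact IsAddCyclic.card_nsmul_eq_zero_le (Int.natAbs_pos.mpr hk)

theorem norm_sum_stdAddChar_pow_eq_le {k : ℤ} (hk : k ≠ 0) {m : ℕ} (hm : m ≠ 0) {c : ZMod n}
    (hc : IsUnit c) :
    ‖∑ x : ZMod n with x ^ m = c, ZMod.stdAddChar ((k : ZMod n) * x)‖ ≤ k.natAbs * √n := by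
  set X : Finset (ZMod n) := {x | x ^ m = c}
  set G : Finset (ZMod n) := {g | g ^ m = 1}
  have hG : ∀ g ∈ G, IsUnit g := fun g hg =>
    (isUnit_pow_iff hm).mp (by rw [(mem_filter_univ g).mp hg]; exact isUnit_one)
  have hGX : ∀ g ∈ G, ∀ x ∈ X, g * x ∈ X := by
    intro g hg x hx
    rw [mem_filter_univ] at hg hx ⊢
    rw [mul_pow, hg, hx, one_mul]
  have hmoment := card_mul_norm_sq_sum_addChar_le (ZMod.isPrimitive_stdAddChar n) hG hGX k
  have hX : (#X : ℝ) ≤ #G := by exact_mod_cast card_pow_eq_le_card_pow_eq_one hm hc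
  have hker : (#{y : ZMod n | (k : ZMod n) * y = 0} : ℝ) ≤ k.natAbs := by
    exact_mod_cast card_mul_eq_zero_le_natAbs hk
  have hGpos : (0 : ℝ) < #G := by exact_mod_cast card_pos.mpr ⟨1, by simp [G]⟩
  have hk1 : (1 : ℝ) ≤ k.natAbs := by exact_mod_cast Int.natAbs_pos.mpr hk
  rw [ZMod.card] at hmoment
  rw [← pow_le_pow_iff_left₀ (norm_nonneg _) (by positivity) two_ne_zero, mul_pow,
    Real.sq_sqrt (Nat.cast_nonneg n)]
  refine le_of_mul_le_mul_left (hmoment.trans ?_) hGpos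
  calc (n : ℝ) * (#X * #{y : ZMod n | (k : ZMod n) * y = 0})
      ≤ n * (#G * k.natAbs) := by gcongr
    _ ≤ n * (#G * k.natAbs ^ 2) := by gcongr; nlinarith
    _ = #G * (k.natAbs ^ 2 * n) := by ring

theorem e_intCast_mul_natCast_div (k : ℤ) (a : ℕ) :
    e (k * a / n) = ZMod.stdAddChar ((k : ZMod n) * (a : ZMod n)) := by
  rw [show (k : ZMod n) * (a : ZMod n) = ((k * a : ℤ) : ZMod n) by push_cast; rfl,
    ZMod.stdAddChar_coe, e]
  push_cast
  ring_nf

theorem sum_range_filter_e_eq_sum_stdAddChar (k : ℤ) (P : ZMod n → Prop) [DecidablePred P] :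
    ∑ a ∈ (range n).filter (fun a : ℕ => P a), e (k * a / n) =
      ∑ x : ZMod n with P x, ZMod.stdAddChar ((k : ZMod n) * x) := by
  refine sum_nbij' (fun a => (a : ZMod n)) ZMod.val (fun a ha => ?_) (fun x hx => ?_)
    (fun a ha => ?_) (fun x _ => ZMod.natCast_zmod_val x)
    (fun a _ => e_intCast_mul_natCast_div k a)
  · simpa using (mem_filter.mp ha).2
  · simpa [ZMod.val_lt] using hx
  · exact ZMod.val_natCast_of_lt (mem_range.mp (mem_filter.mp ha).1)

theorem norm_sum_range_filter_pow_eq_le {k : ℤ} (hk : k ≠ 0) {m : ℕ} (hm : m ≠ 0) {c : ZMod n}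
    (hc : IsUnit c) :
    ‖∑ a ∈ (range n).filter (fun a : ℕ => (a : ZMod n) ^ m = c), e (k * a / n)‖ ≤
      k.natAbs * √n := by
  rw [sum_range_filter_e_eq_sum_stdAddChar k (· ^ m = c)]
  exact norm_sum_stdAddChar_pow_eq_le hk hm hc

theorem norm_sum_range_filter_coprime_le {k : ℤ} (hk : k ≠ 0) :
    ‖∑ a ∈ (range n).filter (fun a => Nat.Coprime a n), e (k * a / n)‖ ≤ k.natAbs * √n := by
  rw [filter_congr fun a _ =>
    (ZMod.isUnit_iff_coprime a n).symm.trans ZMod.isUnit_iff_pow_totient_eq_one]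
  exact norm_sum_range_filter_pow_eq_le hk (Nat.totient_pos.mpr (NeZero.pos n)).ne' isUnit_one

end ZMod

section MillerRabin

variable {R : Type*} [Ring R]

theorem pow_two_pow_mul_ne_neg_one (h : (-1 : R) ≠ 1) {x : R} {d : ℕ} (hx : x ^ d = 1) (j : ℕ) :
    x ^ (2 ^ j * d) ≠ -1 := by
  rw [mul_comm, pow_mul, hx, one_pow]
  exact h.symm

theorem eq_of_pow_two_pow_mul_eq_neg_one (h : (-1 : R) ≠ 1) {x : R} {d i j : ℕ}
    (hi : x ^ (2 ^ i * d) = -1) (hj : x ^ (2 ^ j * d) = -1) : i = j := by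
  wlog hij : i ≤ j generalizing i j
  · exact (this hj hi (le_of_not_ge hij)).symm
  obtain ⟨t, rfl⟩ := Nat.exists_eq_add_of_le hij
  rcases t with _ | t
  · rfl
  refine absurd ?_ h.symm
  rw [← hj, pow_add, mul_right_comm, pow_mul, hi,
    (even_two.pow_of_ne_zero t.succ_ne_zero).neg_one_pow]

theorem Nat.Coprime.of_natCast_pow_eq {n a m : ℕ} {c : ZMod n} (hm : m ≠ 0) (hc : IsUnit c)
    (ha : (a : ZMod n) ^ m = c) : Nat.Coprime a n :=
  (ZMod.isUnit_iff_coprime a n).mp ((isUnit_pow_iff hm).mp (ha ▸ hc))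

def millerRabinWitnesses (n d s : ℕ) : Finset ℕ :=
  (range n).filter fun a => 1 < a ∧ Nat.gcd a n = 1 ∧
    (a : ZMod n) ^ d ≠ 1 ∧ ∀ j < s, (a : ZMod n) ^ (2 ^ j * d) ≠ -1

variable {n d s : ℕ}

theorem millerRabinWitnesses_eq_filter_not (hn : (-1 : ZMod n) ≠ 1) :
    millerRabinWitnesses n d s = ((range n).filter fun a => Nat.Coprime a n).filter
      fun a : ℕ => ¬((a : ZMod n) ^ d = 1 ∨ ∃ j < s, (a : ZMod n) ^ (2 ^ j * d) = -1) := by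
  ext a
  simp only [millerRabinWitnesses, mem_filter, not_or, not_exists, not_and]
  refine ⟨fun ⟨ha, _, hgcd, hd1, hj⟩ => ⟨⟨ha, hgcd⟩, hd1, hj⟩,
    fun ⟨⟨ha, hgcd⟩, hd1, hj⟩ => ⟨ha, ?_, hgcd, hd1, hj⟩⟩
  rcases a with _ | _ | a
  · rw [Nat.Coprime, Nat.gcd_zero_left] at hgcd
    subst hgcd
    exact absurd (Subsingleton.elim _ _) hn
  · exact absurd (by simp) hd1
  · omega

theorem sum_millerRabinWitnesses_add {M : Type*} [AddCommMonoid M] (hn : (-1 : ZMod n) ≠ 1)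
    (hd : d ≠ 0) (f : ℕ → M) :
    ∑ a ∈ millerRabinWitnesses n d s, f a +
        (∑ a ∈ (range n).filter (fun a : ℕ => (a : ZMod n) ^ d = 1), f a +
          ∑ j ∈ range s,
            ∑ a ∈ (range n).filter (fun a : ℕ => (a : ZMod n) ^ (2 ^ j * d) = -1), f a) =
      ∑ a ∈ (range n).filter (fun a => Nat.Coprime a n), f a := by
  set U := (range n).filter fun a => Nat.Coprime a n
  set Q := fun a : ℕ => (a : ZMod n) ^ d = 1 ∨ ∃ j < s, (a : ZMod n) ^ (2 ^ j * d) = -1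
  set A := (range n).filter fun a : ℕ => (a : ZMod n) ^ d = 1
  set B := fun j => (range n).filter fun a : ℕ => (a : ZMod n) ^ (2 ^ j * d) = -1
  have hsplit : U.filter Q = A ∪ (range s).biUnion B := by
    ext a
    simp only [U, Q, A, B, mem_filter, mem_union, mem_biUnion, mem_range]
    constructor
    · rintro ⟨⟨ha, -⟩, hd1 | ⟨j, hj, hj1⟩⟩
      exacts [Or.inl ⟨ha, hd1⟩, Or.inr ⟨j, hj, ha, hj1⟩]
    · rintro (⟨ha, hd1⟩ | ⟨j, hj, ha, hj1⟩)
      · exact ⟨⟨ha, .of_natCast_pow_eq hd isUnit_one hd1⟩, Or.inl hd1⟩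
      · exact ⟨⟨ha, .of_natCast_pow_eq (by positivity) isUnit_one.neg hj1⟩, Or.inr ⟨j, hj, hj1⟩⟩
  have hdisj : Disjoint A ((range s).biUnion B) := by
    simp only [A, B, disjoint_biUnion_right, disjoint_filter]
    exact fun j _ a _ ha => pow_two_pow_mul_ne_neg_one hn ha j
  have hpair : (range s : Set ℕ).PairwiseDisjoint B := fun i _ j _ hij =>
    disjoint_filter.mpr fun a _ hi hj => hij (eq_of_pow_two_pow_mul_eq_neg_one hn hi hj)
  rw [← sum_filter_not_add_sum_filter U Q, hsplit,
    sum_union hdisj, sum_biUnion hpair, millerRabinWitnesses_eq_filter_not hn]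

theorem norm_sum_millerRabinWitnesses_le {E : Type*} [SeminormedAddCommGroup E]
    (hn : (-1 : ZMod n) ≠ 1) (hd : d ≠ 0) (f : ℕ → E) {K : ℝ}
    (hU : ‖∑ a ∈ (range n).filter (fun a => Nat.Coprime a n), f a‖ ≤ K)
    (hB : ∀ j, ‖∑ a ∈ (range n).filter (fun a : ℕ => (a : ZMod n) ^ (2 ^ j * d) = -1), f a‖ ≤ K) :
    ‖∑ a ∈ millerRabinWitnesses n d s, f a‖ ≤
      (s + 1) * K + ‖∑ a ∈ (range n).filter (fun a : ℕ => (a : ZMod n) ^ d = 1), f a‖ := by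
  rw [eq_sub_of_add_eq (sum_millerRabinWitnesses_add (s := s) hn hd f)]
  set A := ∑ a ∈ (range n).filter (fun a : ℕ => (a : ZMod n) ^ d = 1), f a
  calc _ ≤ K + (‖A‖ + ∑ j ∈ range s, K) := by
        refine (norm_sub_le _ _).trans (add_le_add hU ((norm_add_le _ _).trans ?_))
        exact add_le_add_right ((norm_sum_le _ _).trans (sum_le_sum fun j _ => hB j)) _
    _ = (s + 1) * K + ‖A‖ := by
        rw [sum_const, card_range, nsmul_eq_mul]
        ring

theorem norm_sum_e_millerRabinWitnesses_le (hn : 2 < n) (hd : d ≠ 0) {k : ℤ} (hk : k ≠ 0) :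
    ‖∑ a ∈ millerRabinWitnesses n d s, e (k * a / n)‖ ≤
      (s + 1) * (k.natAbs * √n) +
        ‖∑ a ∈ (range n).filter (fun a : ℕ => (a : ZMod n) ^ d = 1), e (k * a / n)‖ := by
  have : NeZero n := ⟨by omega⟩
  have : Fact (2 < n) := ⟨hn⟩
  exact norm_sum_millerRabinWitnesses_le ZMod.neg_one_ne_one hd _
    (norm_sum_range_filter_coprime_le hk)
    fun j => norm_sum_range_filter_pow_eq_le hk (by positivity) isUnit_one.neg

end MillerRabin

theorem witness_sum_bound_general (n d s : ℕ) (hodd : Odd n)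
    (hd : Odd d) (hds : n - 1 = d * 2 ^ s) (k : ℤ) (hk : k ≠ 0) :
    ‖∑ w ∈ (Finset.range n).filter (fun a : ℕ => 1 < a ∧ Nat.gcd a n = 1 ∧
        (a : ZMod n) ^ d ≠ 1 ∧ ∀ j < s, (a : ZMod n) ^ (2 ^ j * d) ≠ -1),
        e ((k : ℝ) * w / n)‖ ≤
      (sigma 1 k.natAbs : ℝ) +
        (1 + Real.logb 2 n) * ((k.natAbs : ℝ) * Real.sqrt n + (sigma 1 k.natAbs : ℝ)) := by
  have hn : 2 < n := by
    have : 0 < d * 2 ^ s := Nat.mul_pos hd.pos (Nat.two_pow_pos s)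
    obtain ⟨t, rfl⟩ := hodd
    omega
  have : NeZero n := ⟨by omega⟩
  have hW := norm_sum_e_millerRabinWitnesses_le (s := s) hn hd.pos.ne' hk
  have hσ : (1 : ℝ) ≤ sigma 1 k.natAbs :=
    Nat.one_le_cast.mpr (sigma_pos 1 _ (Int.natAbs_ne_zero.mpr hk))
  have hK : 0 ≤ (k.natAbs : ℝ) * √n := by positivity
  have hlog (t : ℕ) (ht : 2 ^ t ≤ n) : (t : ℝ) ≤ Real.logb 2 n :=
    (Nat.cast_le.mpr (Nat.le_log_of_pow_le one_lt_two ht)).trans (Real.natLog_le_logb n 2)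
  change ‖∑ w ∈ millerRabinWitnesses n d s, e (k * w / n)‖ ≤ _
  obtain rfl | hd3 : d = 1 ∨ 3 ≤ d := by obtain ⟨t, rfl⟩ := hd; omega
  · simp only [pow_one] at hW
    rw [range_filter_natCast_eq_one (by omega), sum_singleton, norm_e] at hW
    have hs := hlog s (by omega)
    nlinarith [mul_le_mul_of_nonneg_right (add_le_add_right hs 1) hK]
  · have hs := hlog (s + 1) (by have := Nat.mul_le_mul_right (2 ^ s) hd3; rw [pow_succ]; omega)
    have hA := norm_sum_range_filter_pow_eq_le hk hd.pos.ne' (isUnit_one (M := ZMod n))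
    push_cast at hs
    nlinarith [mul_le_mul_of_nonneg_right hs hK]

/-- the exponential sum over the Miller-Rabin witness set is
O_k(√n log n). -/
theorem witness_sum_bound (n d s : ℕ) (hodd : Odd n) (hcomp : ¬ n.Prime) (hn : 1 < n)
    (hd : Odd d) (hds : n - 1 = d * 2 ^ s) (k : ℤ) (hk : k ≠ 0) :
    ‖∑ w ∈ (Finset.range n).filter (fun a : ℕ => 1 < a ∧ Nat.gcd a n = 1 ∧
        (a : ZMod n) ^ d ≠ 1 ∧ ∀ j < s, (a : ZMod n) ^ (2 ^ j * d) ≠ -1),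
        e ((k : ℝ) * w / n)‖ ≤
      (sigma 1 k.natAbs : ℝ) +
        (1 + Real.logb 2 n) * ((k.natAbs : ℝ) * Real.sqrt n + (sigma 1 k.natAbs : ℝ)) :=
  witness_sum_bound_general n d s hodd hd hds k hk
end
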